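/- arXiv:1905.13192 — 4 statements merged into one kernel-verified Lean document; each statement's English description precedes it below -/
import Mathlib

section
/- For unit vectors x, y in R^d with inner product ρ = ⟨x,y⟩, the expectation E[σ(a)σ(b)], where (a,b) is a centered Gaussian with covariance matrix [[1, ρ],[ρ, 1]] and σ(z)=max(z,0) is the ReLU, equals ρ(π - arccos ρ)/(2π) + sqrt(1-ρ²)/(2π). -/
open MeasureTheory ProbabilityTheory Real

open scoped NNReal ENNReal

section Auxiliary
open Set Filter Topology


lemma radial : ∫ r in Set.Ioi (0:ℝ), r^3 * Real.exp (-r^2/2) = 2 := by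
  have hint : IntegrableOn (fun r : ℝ => r^3 * Real.exp (-r^2/2)) (Set.Ioi 0) := by
    refine (integrableOn_rpow_mul_exp_neg_mul_sq (b := (1:ℝ)/2) (by norm_num)
      (s := 3) (by norm_num)).congr_fun ?_ measurableSet_Ioi
    intro x hx
    have h3 : x ^ (3:ℝ) = x ^ (3:ℕ) := by
      rw [← Real.rpow_natCast]; norm_num
    simp only [h3]
    ring_nf
  have hderiv : ∀ r ∈ Set.Ioi (0:ℝ),
      HasDerivAt (fun r : ℝ => -(r^2+2) * Real.exp (-r^2/2)) (r^3 * Real.exp (-r^2/2)) r := by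
    intro r _
    have h1 : HasDerivAt (fun r : ℝ => -(r^2+2)) (-(2*r)) r := by
      exact (((hasDerivAt_pow 2 r).add_const 2).neg).congr_deriv (by norm_num)
    have h2 : HasDerivAt (fun r : ℝ => Real.exp (-r^2/2)) (Real.exp (-r^2/2) * (-r)) r := by
      have h0 : HasDerivAt (fun r : ℝ => -r^2/2) (-r) r := by
        have := ((hasDerivAt_pow 2 r).neg.div_const 2)
        exact this.congr_deriv (by norm_num; ring)
      exact (Real.hasDerivAt_exp (-r^2/2)).comp r h0
    exact (h1.mul h2).congr_deriv (by ring)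
  have hcont : ContinuousOn (fun r : ℝ => -(r^2+2) * Real.exp (-r^2/2)) (Set.Ici 0) := by
    fun_prop
  have htend : Tendsto (fun r : ℝ => -(r^2+2) * Real.exp (-r^2/2)) atTop (𝓝 0) := by
    have t1 : Tendsto (fun r : ℝ => r^2/2) atTop atTop := by
      apply Tendsto.atTop_div_const (by norm_num)
      exact tendsto_pow_atTop (by norm_num)
    have t2 : Tendsto (fun u : ℝ => -(2*u+2) * Real.exp (-u)) atTop (𝓝 0) := by
      have a1 := (Real.tendsto_pow_mul_exp_neg_atTop_nhds_zero 1)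
      have a2 := Real.tendsto_exp_neg_atTop_nhds_zero
      have h := ((a1.const_mul (-2)).add (a2.const_mul (-2)))
      simp only [mul_zero, add_zero] at h
      refine h.congr fun u => ?_
      ring
    have h := t2.comp t1
    refine h.congr fun r => ?_
    simp only [Function.comp]
    ring_nf
  have h := MeasureTheory.integral_Ioi_of_hasDerivAt_of_tendsto
    (f := fun r : ℝ => -(r^2+2) * Real.exp (-r^2/2)) (a := 0)
    (hcont 0 Set.self_mem_Ici) hderiv hint htend
  rw [h]
  norm_num


lemma angular {α : ℝ} (h0 : 0 ≤ α) (hπ : α ≤ π) :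
    ∫ θ in Set.Ioo (-π) π, max (Real.cos θ) 0 * max (Real.cos (θ - α)) 0
      = (Real.sin α + (π - α) * Real.cos α) / 2 := by
  have hpi := Real.pi_pos
  set g : ℝ → ℝ := fun θ => max (Real.cos θ) 0 * max (Real.cos (θ - α)) 0 with hg
  -- indicator equality
  have hind : (Set.Ioo (-π) π).indicator g = (Set.Ioo (α - π/2) (π/2)).indicator g := by
    funext θ
    by_cases ht : θ ∈ Set.Ioo (α - π/2) (π/2)
    · have hs : θ ∈ Set.Ioo (-π) π := by
        constructor
        · linarith [ht.1]
        · linarith [ht.2]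
      rw [Set.indicator_of_mem ht, Set.indicator_of_mem hs]
    · rw [Set.indicator_of_notMem ht]
      by_cases hs : θ ∈ Set.Ioo (-π) π
      · rw [Set.indicator_of_mem hs]
        -- show g θ = 0
        rcases le_or_gt (Real.cos θ) 0 with hc | hc
        · simp [hg, max_eq_right hc]
        · -- cos θ > 0, θ ∈ (-π, π) ⇒ θ ∈ (-π/2, π/2)
          have hθ1 : -(π/2) < θ := by
            by_contra h
            push_neg at h
            have : Real.cos θ ≤ 0 := by
              rw [← Real.cos_neg]
              apply Real.cos_nonpos_of_pi_div_two_le_of_le (by linarith) (by linarith [hs.1])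
            linarith
          have hθ2 : θ < π/2 := by
            by_contra h
            push_neg at h
            have : Real.cos θ ≤ 0 :=
              Real.cos_nonpos_of_pi_div_two_le_of_le h (by linarith [hs.2])
            linarith
          -- so θ ≤ α - π/2, hence cos(θ-α) ≤ 0
          have hle : θ ≤ α - π/2 := by
            rcases not_and_or.mp (fun h => ht ⟨h.1, h.2⟩) with h | h
            · push_neg at h; linarith
            · push_neg at h; linarith
          have : Real.cos (θ - α) ≤ 0 := by
            rw [← Real.cos_neg, neg_sub]
            apply Real.cos_nonpos_of_pi_div_two_le_of_le
            · linarith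
            · linarith
          simp [hg, max_eq_right this]
      · rw [Set.indicator_of_notMem hs]
  have hIoo : ∫ θ in Set.Ioo (-π) π, g θ = ∫ θ in Set.Ioo (α - π/2) (π/2), g θ := by
    rw [← integral_indicator measurableSet_Ioo, hind, integral_indicator measurableSet_Ioo]
  rw [hIoo]
  -- on the small interval, g = cos θ * cos (θ - α)
  have hcongr : ∫ θ in Set.Ioo (α - π/2) (π/2), g θ
      = ∫ θ in Set.Ioo (α - π/2) (π/2), Real.cos θ * Real.cos (θ - α) := by
    apply setIntegral_congr_fun measurableSet_Ioo
    intro θ hθ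
    have h1 : 0 ≤ Real.cos θ := by
      apply Real.cos_nonneg_of_mem_Icc
      constructor
      · linarith [hθ.1]
      · linarith [hθ.2]
    have h2 : 0 ≤ Real.cos (θ - α) := by
      apply Real.cos_nonneg_of_mem_Icc
      constructor
      · linarith [hθ.1]
      · linarith [hθ.2]
    simp [hg, max_eq_left h1, max_eq_left h2]
  rw [hcongr]
  have hab : α - π/2 ≤ π/2 := by linarith
  rw [← MeasureTheory.integral_Ioc_eq_integral_Ioo,
    ← intervalIntegral.integral_of_le hab]
  have key : ∫ θ in (α - π/2)..(π/2), Real.cos θ * Real.cos (θ - α)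
      = (Real.sin α + (π - α) * Real.cos α) / 2 := by
    have hF : ∀ θ : ℝ, HasDerivAt (fun θ : ℝ => Real.sin (2*θ - α)/4 + θ * Real.cos α / 2)
        (Real.cos θ * Real.cos (θ - α)) θ := by
      intro θ
      have d1 : HasDerivAt (fun θ : ℝ => 2*θ - α) 2 θ := by
        simpa using ((hasDerivAt_id θ).const_mul 2).sub_const α
      have d2 : HasDerivAt (fun θ : ℝ => Real.sin (2*θ - α)) (Real.cos (2*θ - α) * 2) θ :=
        d1.sin
      have d3 : HasDerivAt (fun θ : ℝ => Real.sin (2*θ - α)/4 + θ * Real.cos α / 2)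
          (Real.cos (2*θ - α) * 2 / 4 + Real.cos α / 2) θ := by
        apply (d2.div_const 4).add
        simpa using ((hasDerivAt_id θ).mul_const (Real.cos α)).div_const 2
      convert d3 using 1
      have e1 : (2:ℝ)*θ - α = θ + (θ - α) := by ring
      rw [e1, Real.cos_add, Real.cos_sub, Real.sin_sub]
      linear_combination (Real.sin_sq_add_cos_sq θ) * (Real.cos α / 2)
    rw [intervalIntegral.integral_eq_sub_of_hasDerivAt (fun θ _ => hF θ) ?cont]
    case cont =>
      apply Continuous.intervalIntegrable
      fun_prop
    have e2 : 2*(π/2) - α = π - α := by ring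
    have e3 : 2*(α - π/2) - α = -(π - α) := by ring
    rw [e2, e3, Real.sin_neg, Real.sin_pi_sub]
    ring
  rw [key]


lemma prod_gaussian : (gaussianReal 0 1).prod (gaussianReal 0 1) =
    ((volume : Measure ℝ).prod (volume : Measure ℝ)).withDensity
      (fun p => gaussianPDF 0 1 p.1 * gaussianPDF 0 1 p.2) := by
  refine Measure.prod_eq fun s t hs ht => ?_
  rw [withDensity_apply _ (hs.prod ht), ← Measure.prod_restrict,
    MeasureTheory.lintegral_prod_mul
      ((measurable_gaussianPDF 0 1).aemeasurable)
      ((measurable_gaussianPDF 0 1).aemeasurable),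
    gaussianReal_of_var_ne_zero 0 one_ne_zero, withDensity_apply _ hs, withDensity_apply _ ht]

end Auxiliary

section Main
open Set Filter Topology

/-- For unit vectors `x, y` in `ℝ^d` with `ρ = ⟨x, y⟩`, the expectation
`E[σ(a)σ(b)]`, where `(a,b)` is a centered Gaussian with covariance
`[[1, ρ], [ρ, 1]]` (realized as `a = X`, `b = ρ X + √(1-ρ²) Y` for independent
standard Gaussians `X, Y`) and `σ` is ReLU, equals
`(ρ(π - arccos ρ) + √(1-ρ²)) / (2π)`. -/
theorem relu_arccos_kernel {d : ℕ} (x y : EuclideanSpace ℝ (Fin d))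
    (hx : ‖x‖ = 1) (hy : ‖y‖ = 1) (ρ : ℝ) (hρ : ρ = inner ℝ x y) :
    ∫ p : ℝ × ℝ,
        max p.1 0 * max (ρ * p.1 + Real.sqrt (1 - ρ ^ 2) * p.2) 0
        ∂((gaussianReal 0 1).prod (gaussianReal 0 1))
      = (ρ * (π - Real.arccos ρ) + Real.sqrt (1 - ρ ^ 2)) / (2 * π) := by
  have hpi := Real.pi_pos
  have hρ1 : |ρ| ≤ 1 := by
    rw [hρ]
    calc |(inner ℝ x y : ℝ)| ≤ ‖x‖ * ‖y‖ := abs_real_inner_le_norm x y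
    _ = 1 := by rw [hx, hy, mul_one]
  set s : ℝ := Real.sqrt (1 - ρ ^ 2) with hs
  set α : ℝ := Real.arccos ρ with hα
  have hcos : Real.cos α = ρ := Real.cos_arccos (abs_le.mp hρ1).1 (abs_le.mp hρ1).2
  have hsin : Real.sin α = s := Real.sin_arccos ρ
  have hα0 : 0 ≤ α := Real.arccos_nonneg ρ
  have hαπ : α ≤ π := Real.arccos_le_pi ρ
  set F : ℝ × ℝ → ℝ := fun p => max p.1 0 * max (ρ * p.1 + s * p.2) 0 with hF
  -- convert to a Lebesgue integral over ℝ²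
  have hnn : ∀ a : ℝ, gaussianPDF 0 1 a = ((Real.toNNReal (gaussianPDFReal 0 1 a) : ℝ≥0) : ℝ≥0∞) := by
    intro a
    rw [gaussianPDF, ENNReal.ofReal]
  have step1 : ∫ p : ℝ × ℝ, F p ∂((gaussianReal 0 1).prod (gaussianReal 0 1))
      = ∫ p : ℝ × ℝ, (gaussianPDFReal 0 1 p.1 * gaussianPDFReal 0 1 p.2) * F p
          ∂((volume : Measure ℝ).prod volume) := by
    rw [prod_gaussian]
    have : (fun p : ℝ × ℝ => gaussianPDF 0 1 p.1 * gaussianPDF 0 1 p.2)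
        = fun p : ℝ × ℝ => ((Real.toNNReal (gaussianPDFReal 0 1 p.1)
            * Real.toNNReal (gaussianPDFReal 0 1 p.2) : ℝ≥0) : ℝ≥0∞) := by
      funext p
      rw [hnn, hnn, ENNReal.coe_mul]
    rw [this, integral_withDensity_eq_integral_smul]
    · apply integral_congr_ae
      filter_upwards with p
      rw [NNReal.smul_def, NNReal.coe_mul,
        Real.coe_toNNReal _ (gaussianPDFReal_nonneg 0 1 _),
        Real.coe_toNNReal _ (gaussianPDFReal_nonneg 0 1 _), smul_eq_mul]
    · exact ((measurable_gaussianPDFReal 0 1).comp measurable_fst).real_toNNReal.mul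
        ((measurable_gaussianPDFReal 0 1).comp measurable_snd).real_toNNReal
  rw [step1, ← Measure.volume_eq_prod, ← integral_comp_polarCoord_symm]
  have htarget : polarCoord.target = Set.Ioi (0:ℝ) ×ˢ Set.Ioo (-π) π := rfl
  have step2 : ∫ p in polarCoord.target,
      p.1 • ((gaussianPDFReal 0 1 (polarCoord.symm p).1
        * gaussianPDFReal 0 1 (polarCoord.symm p).2) * F (polarCoord.symm p))
      = ∫ p in Set.Ioi (0:ℝ) ×ˢ Set.Ioo (-π) π,
          ((2*π)⁻¹ * (p.1^3 * Real.exp (-p.1^2/2)))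
            * (max (Real.cos p.2) 0 * max (Real.cos (p.2 - α)) 0) := by
    rw [htarget]
    apply setIntegral_congr_fun (measurableSet_Ioi.prod measurableSet_Ioo)
    rintro ⟨r, θ⟩ ⟨hr, hθ⟩
    simp only [Set.mem_Ioi] at hr
    have hsymm : polarCoord.symm (r, θ) = (r * Real.cos θ, r * Real.sin θ) := rfl
    dsimp only
    rw [hsymm]
    simp only [gaussianPDFReal, hF, smul_eq_mul]
    push_cast
    rw [mul_one, mul_one]
    have e1 : (√(2*π))⁻¹ * Real.exp (-(r * Real.cos θ - 0)^2/2)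
        * ((√(2*π))⁻¹ * Real.exp (-(r * Real.sin θ - 0)^2/2))
        = (2*π)⁻¹ * Real.exp (-r^2/2) := by
      rw [mul_mul_mul_comm, ← mul_inv, Real.mul_self_sqrt (by positivity), ← Real.exp_add]
      have hcs : Real.cos θ ^ 2 + Real.sin θ ^ 2 = 1 := Real.cos_sq_add_sin_sq θ
      have eexp : -(r * Real.cos θ - 0)^2/2 + -(r * Real.sin θ - 0)^2/2 = -r^2/2 := by
        linear_combination (-(r^2)/2) * hcs
      rw [eexp]
    have e2 : max (r * Real.cos θ) 0 = r * max (Real.cos θ) 0 := by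
      rw [mul_max_of_nonneg _ _ hr.le, mul_zero]
    have e3 : max (ρ * (r * Real.cos θ) + s * (r * Real.sin θ)) 0
        = r * max (Real.cos (θ - α)) 0 := by
      have : ρ * (r * Real.cos θ) + s * (r * Real.sin θ) = r * Real.cos (θ - α) := by
        rw [Real.cos_sub, hcos, hsin]
        ring
      rw [this, mul_max_of_nonneg _ _ hr.le, mul_zero]
    rw [e1, e2, e3]
    ring
  rw [step2, Measure.volume_eq_prod]
  have hpm := MeasureTheory.setIntegral_prod_mul (μ := (volume : Measure ℝ))
    (ν := (volume : Measure ℝ))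
    (fun r : ℝ => (2*π)⁻¹ * (r^3 * Real.exp (-r^2/2)))
    (fun θ : ℝ => max (Real.cos θ) 0 * max (Real.cos (θ - α)) 0)
    (Set.Ioi 0) (Set.Ioo (-π) π)
  rw [hpm, MeasureTheory.integral_const_mul, radial, angular hα0 hαπ]
  rw [hcos, hsin]
  field_simp
  ring

end Main
end

section
/- For ρ ∈ [-1,1], the function ρ · ((π - arccos ρ)/(2π)) admits the power series expansion ρ/4 + (1/(2π)) · Σ_{l=1}^∞ [(2l-3)!!/((2l-2)!! · (2l-1))] · ρ^{2l}, where the series converges for all ρ ∈ [-1,1]. -/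
open Real

open Set

noncomputable def aDF (k : ℕ) : ℝ :=
  (Nat.doubleFactorial (2 * k - 1) : ℝ) / (Nat.doubleFactorial (2 * k) : ℝ)

noncomputable def cDF (k : ℕ) : ℝ := aDF k / (2 * k + 1)

lemma aDF_pos (k : ℕ) : 0 < aDF k :=
  div_pos (by exact_mod_cast (2 * k - 1).doubleFactorial_pos)
    (by exact_mod_cast (2 * k).doubleFactorial_pos)

lemma aDF_zero : aDF 0 = 1 := by simp [aDF, Nat.doubleFactorial]

lemma aDF_succ (k : ℕ) : aDF (k + 1) * (2 * k + 2) = aDF k * (2 * k + 1) := by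
  have h1 : 2 * (k + 1) - 1 = 2 * k + 1 := by omega
  have h2 : 2 * (k + 1) = 2 * k + 2 := by omega
  have e1 : (2 * k + 1).doubleFactorial = (2 * k + 1) * (2 * k - 1).doubleFactorial := by
    have := Nat.doubleFactorial_add_one (2 * k)
    simpa using this
  have e2 : (2 * k + 2).doubleFactorial = (2 * k + 2) * (2 * k).doubleFactorial := by
    have := Nat.doubleFactorial_add_two (2 * k)
    simpa using this
  have hp1 : ((2 * k).doubleFactorial : ℝ) ≠ 0 := by
    exact_mod_cast (2 * k).doubleFactorial_pos.ne'
  unfold aDF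
  rw [h1, h2, e1, e2]
  push_cast
  field_simp

lemma aDF_le_one (k : ℕ) : aDF k ≤ 1 := by
  induction k with
  | zero => rw [aDF_zero]
  | succ n ih =>
    have h := aDF_succ n
    have hpos : (0:ℝ) < 2 * n + 2 := by positivity
    nlinarith [aDF_pos (n + 1), aDF_pos n]

lemma aDF_sq (k : ℕ) : (aDF k) ^ 2 * (2 * k + 1) ≤ 1 := by
  induction k with
  | zero => rw [aDF_zero]; norm_num
  | succ n ih =>
    have h := aDF_succ n
    have hp1 : (0:ℝ) < 2 * n + 2 := by positivity
    have hp2 : (0:ℝ) < 2 * n + 1 := by positivity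
    have ha := aDF_pos n
    have ha1 := aDF_pos (n + 1)
    have key : aDF (n + 1) = aDF n * (2 * n + 1) / (2 * n + 2) := by
      field_simp at h ⊢; linarith
    rw [key]
    push_cast
    have : (aDF n * (2 * n + 1) / (2 * n + 2)) ^ 2 * (2 * (n+1) + 1)
        = (aDF n ^ 2 * (2 * n + 1)) * ((2 * n + 1) * (2 * n + 3) / (2 * n + 2) ^ 2) := by
      push_cast; field_simp; ring
    rw [this]
    have hfrac : (2 * (n:ℝ) + 1) * (2 * n + 3) / (2 * n + 2) ^ 2 ≤ 1 := by
      rw [div_le_one (by positivity)]; nlinarith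
    have hnn : (0:ℝ) ≤ aDF n ^ 2 * (2 * n + 1) := by positivity
    nlinarith [mul_nonneg hnn (le_of_lt (by positivity : (0:ℝ) < (2 * (n:ℝ) + 1) * (2 * n + 3) / (2 * n + 2) ^ 2))]
lemma cDF_pos (k : ℕ) : 0 < cDF k := div_pos (aDF_pos k) (by positivity)

lemma cDF_le (k : ℕ) : cDF k ≤ ((k : ℝ) + 1) ^ (-(3/2) : ℝ) := by
  have hk1 : (0:ℝ) < (k:ℝ) + 1 := by positivity
  have hs : (0:ℝ) < Real.sqrt ((k:ℝ) + 1) := Real.sqrt_pos.mpr hk1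
  have ha := aDF_pos k
  have h1 : aDF k * Real.sqrt ((k:ℝ) + 1) ≤ 1 := by
    have hsq : (aDF k * Real.sqrt ((k:ℝ) + 1)) ^ 2 ≤ 1 := by
      have he : (aDF k * Real.sqrt ((k:ℝ) + 1)) ^ 2 = aDF k ^ 2 * ((k:ℝ) + 1) := by
        rw [mul_pow, Real.sq_sqrt hk1.le]
      rw [he]
      have h2 := aDF_sq k
      nlinarith [sq_nonneg (aDF k)]
    nlinarith [mul_pos ha hs]
  have hrw : ((k : ℝ) + 1) ^ (-(3/2) : ℝ) = 1 / (((k:ℝ) + 1) * Real.sqrt ((k:ℝ) + 1)) := by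
    rw [Real.rpow_neg hk1.le, one_div]
    congr 1
    rw [show ((3:ℝ)/2) = (1 : ℝ) + (1/2 : ℝ) by norm_num, Real.rpow_add hk1, Real.rpow_one,
      ← Real.sqrt_eq_rpow]
  rw [hrw]
  unfold cDF
  rw [div_le_div_iff₀ (by positivity) (by positivity), one_mul]
  have h2 : aDF k * Real.sqrt ((k:ℝ) + 1) * ((k:ℝ)+1) ≤ 1 * ((k:ℝ)+1) :=
    mul_le_mul_of_nonneg_right h1 hk1.le
  nlinarith [hs.le, ha.le]

lemma summable_cDF : Summable cDF := by
  have h32 : Summable (fun n : ℕ => ((n : ℝ)) ^ (-(3/2) : ℝ)) :=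
    Real.summable_nat_rpow.mpr (by norm_num)
  have h : Summable (fun k : ℕ => ((k : ℝ) + 1) ^ (-(3/2) : ℝ)) := by
    have := (summable_nat_add_iff 1).mpr h32
    simpa [Nat.cast_add] using this
  exact Summable.of_nonneg_of_le (fun k => (cDF_pos k).le) cDF_le h
noncomputable def Sfun (x : ℝ) : ℝ := ∑' k : ℕ, cDF k * x ^ (2 * k + 1)
noncomputable def hfun (x : ℝ) : ℝ := ∑' k : ℕ, aDF k * x ^ (2 * k)
noncomputable def Dfun (x : ℝ) : ℝ := ∑' k : ℕ, aDF k * (2 * k) * x ^ (2 * k - 1)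

lemma cDF_mul (k : ℕ) : cDF k * (2 * k + 1) = aDF k := by
  unfold cDF; field_simp

lemma summable_S {x : ℝ} (hx : |x| ≤ 1) : Summable (fun k : ℕ => cDF k * x ^ (2 * k + 1)) := by
  apply Summable.of_norm_bounded summable_cDF
  intro k
  rw [norm_mul, norm_pow, Real.norm_eq_abs, Real.norm_eq_abs, abs_of_pos (cDF_pos k)]
  calc cDF k * |x| ^ (2 * k + 1) ≤ cDF k * 1 := by
        apply mul_le_mul_of_nonneg_left _ (cDF_pos k).le
        exact pow_le_one₀ (abs_nonneg x) hx
    _ = cDF k := mul_one _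

lemma summable_h {x : ℝ} (hx : |x| < 1) : Summable (fun k : ℕ => aDF k * x ^ (2 * k)) := by
  apply Summable.of_norm_bounded (g := fun k => (x ^ 2) ^ k)
  · exact summable_geometric_of_lt_one (by positivity)
      ((sq_lt_one_iff_abs_lt_one x).mpr hx)
  · intro k
    rw [norm_mul, norm_pow, Real.norm_eq_abs, Real.norm_eq_abs, abs_of_pos (aDF_pos k),
      ← sq_abs, ← pow_mul]
    calc aDF k * |x| ^ (2 * k) ≤ 1 * |x| ^ (2 * k) :=
          mul_le_mul_of_nonneg_right (aDF_le_one k) (by positivity)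
      _ = |x| ^ (2 * k) := one_mul _

lemma summable_kgeom {r : ℝ} (hr0 : 0 ≤ r) (hr : r < 1) :
    Summable (fun k : ℕ => (2 * (k:ℝ) + 1) * r ^ k) := by
  have h1 : Summable (fun k : ℕ => ((k:ℝ)) * r ^ k) := by
    have := summable_pow_mul_geometric_of_norm_lt_one 1 (by rwa [Real.norm_eq_abs, abs_of_nonneg hr0] : ‖r‖ < 1)
    simpa using this
  have h2 : Summable (fun k : ℕ => r ^ k) := summable_geometric_of_lt_one hr0 hr
  have := (h1.mul_left 2).add h2
  apply this.congr
  intro k; ring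

lemma summable_b {x : ℝ} (hx : |x| < 1) :
    Summable (fun k : ℕ => aDF k * (2 * (k:ℝ) + 1) * x ^ (2 * k + 1)) := by
  apply Summable.of_norm_bounded (summable_kgeom (abs_nonneg x) hx)
  intro k
  rw [norm_mul, norm_mul, norm_pow, Real.norm_eq_abs, Real.norm_eq_abs, Real.norm_eq_abs,
    abs_of_pos (aDF_pos k), abs_of_pos (by positivity : (0:ℝ) < 2 * (k:ℝ) + 1)]
  have h1 : |x| ^ (2 * k + 1) ≤ |x| ^ k :=
    pow_le_pow_of_le_one (abs_nonneg x) hx.le (by omega)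
  calc aDF k * (2 * (k:ℝ) + 1) * |x| ^ (2 * k + 1)
      ≤ 1 * (2 * (k:ℝ) + 1) * |x| ^ k := by
        apply mul_le_mul (mul_le_mul_of_nonneg_right (aDF_le_one k) (by positivity)) h1
          (by positivity) (by positivity)
    _ = (2 * (k:ℝ) + 1) * |x| ^ k := by ring

lemma summable_D {x : ℝ} (hx : |x| < 1) :
    Summable (fun k : ℕ => aDF k * (2 * (k:ℝ)) * x ^ (2 * k - 1)) := by
  apply Summable.of_norm_bounded (summable_kgeom (abs_nonneg x) hx)
  intro k
  rcases Nat.eq_zero_or_pos k with rfl | hk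
  · simp
  rw [norm_mul, norm_mul, norm_pow, Real.norm_eq_abs, Real.norm_eq_abs, Real.norm_eq_abs,
    abs_of_pos (aDF_pos k), abs_of_nonneg (by positivity : (0:ℝ) ≤ 2 * (k:ℝ))]
  have h1 : |x| ^ (2 * k - 1) ≤ |x| ^ k :=
    pow_le_pow_of_le_one (abs_nonneg x) hx.le (by omega)
  calc aDF k * (2 * (k:ℝ)) * |x| ^ (2 * k - 1)
      ≤ 1 * (2 * (k:ℝ) + 1) * |x| ^ k := by
        apply mul_le_mul (by nlinarith [aDF_le_one k, aDF_pos k, (by positivity : (0:ℝ) ≤ 2 * (k:ℝ))]) h1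
          (by positivity) (by positivity)
    _ = (2 * (k:ℝ) + 1) * |x| ^ k := by ring
lemma eqOn_Ioo_of_hasDerivAt {f g F' : ℝ → ℝ}
    (hf : ∀ x ∈ Ioo (-1:ℝ) 1, HasDerivAt f (F' x) x)
    (hg : ∀ x ∈ Ioo (-1:ℝ) 1, HasDerivAt g (F' x) x)
    (h0 : f 0 = g 0) : EqOn f g (Ioo (-1:ℝ) 1) := by
  apply (convex_Ioo (-1:ℝ) 1).eqOn_of_fderivWithin_eq
    (fun x hx => ((hf x hx).differentiableAt).differentiableWithinAt)
    (fun x hx => ((hg x hx).differentiableAt).differentiableWithinAt)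
    (isOpen_Ioo.uniqueDiffOn)
    (fun x hx => by
      rw [fderivWithin_of_isOpen isOpen_Ioo hx, fderivWithin_of_isOpen isOpen_Ioo hx,
        (hf x hx).hasFDerivAt.fderiv, (hg x hx).hasFDerivAt.fderiv])
    (show (0:ℝ) ∈ Ioo (-1:ℝ) 1 by norm_num) h0

lemma hasDerivAt_Sfun {x : ℝ} (hx : |x| < 1) : HasDerivAt Sfun (hfun x) x := by
  set r : ℝ := (|x| + 1) / 2 with hr
  have hax := abs_nonneg x
  have hr0 : (0:ℝ) ≤ r := by positivity
  have hxr : |x| < r := by rw [hr]; linarith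
  have hr1 : r < 1 := by rw [hr]; linarith
  have hmem : x ∈ Ioo (-r) r := abs_lt.mp hxr
  have key := hasDerivAt_tsum_of_isPreconnected
    (u := fun k : ℕ => (r ^ 2) ^ k) (t := Ioo (-r) r) (y₀ := 0) (y := x)
    (g := fun k y => cDF k * y ^ (2 * k + 1))
    (g' := fun k y => cDF k * ((2 * (k:ℝ) + 1) * y ^ (2 * k)))
    (summable_geometric_of_lt_one (by positivity) (by nlinarith))
    isOpen_Ioo (convex_Ioo _ _).isPreconnected
    (fun k y _ => by
      have h := (hasDerivAt_pow (2 * k + 1) y).const_mul (cDF k)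
      have he : cDF k * (↑(2 * k + 1) * y ^ (2 * k + 1 - 1))
          = cDF k * ((2 * (k:ℝ) + 1) * y ^ (2 * k)) := by
        push_cast [Nat.add_sub_cancel]; ring
      simpa only [he] using h)
    (fun k y hy => by
      have hyr : |y| < r := abs_lt.mpr hy
      rw [Real.norm_eq_abs, abs_mul, abs_mul, abs_of_pos (cDF_pos k),
        abs_of_pos (by positivity : (0:ℝ) < 2 * (k:ℝ) + 1), abs_pow]
      have h1 : cDF k * (2 * (k:ℝ) + 1) = aDF k := cDF_mul k
      rw [← mul_assoc, h1]
      calc aDF k * |y| ^ (2 * k)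
          ≤ 1 * r ^ (2 * k) := by
            apply mul_le_mul (aDF_le_one k)
              (pow_le_pow_left₀ (abs_nonneg y) hyr.le _) (by positivity) zero_le_one
        _ = (r ^ 2) ^ k := by rw [one_mul, ← pow_mul]
      )
    (mem_Ioo.mpr ⟨by linarith, by linarith⟩)
    (summable_zero.congr (fun k => by simp))
    hmem
  have he : (∑' k : ℕ, cDF k * ((2 * (k:ℝ) + 1) * x ^ (2 * k))) = hfun x := by
    unfold hfun
    apply tsum_congr
    intro k
    rw [← mul_assoc, cDF_mul]
  rw [he] at key
  exact key

lemma hasDerivAt_hfun {x : ℝ} (hx : |x| < 1) : HasDerivAt hfun (Dfun x) x := by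
  set r : ℝ := (|x| + 1) / 2 with hr
  have hax := abs_nonneg x
  have hr0 : (0:ℝ) ≤ r := by positivity
  have hxr : |x| < r := by rw [hr]; linarith
  have hr1 : r < 1 := by rw [hr]; linarith
  have hmem : x ∈ Ioo (-r) r := abs_lt.mp hxr
  have hu : Summable (fun k : ℕ => 2 * (k:ℝ) * r ^ (2 * k - 1)) := by
    refine Summable.of_nonneg_of_le (fun k => by positivity) (fun k => ?_)
      (summable_kgeom hr0 hr1)
    apply mul_le_mul (by linarith)
      (pow_le_pow_of_le_one hr0 hr1.le (by omega)) (by positivity) (by positivity)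
  have key := hasDerivAt_tsum_of_isPreconnected
    (u := fun k : ℕ => 2 * (k:ℝ) * r ^ (2 * k - 1)) (t := Ioo (-r) r) (y₀ := 0) (y := x)
    (g := fun k y => aDF k * y ^ (2 * k))
    (g' := fun k y => aDF k * (2 * (k:ℝ)) * y ^ (2 * k - 1))
    hu isOpen_Ioo (convex_Ioo _ _).isPreconnected
    (fun k y _ => by
      have h := (hasDerivAt_pow (2 * k) y).const_mul (aDF k)
      have he : aDF k * (↑(2 * k) * y ^ (2 * k - 1))
          = aDF k * (2 * (k:ℝ)) * y ^ (2 * k - 1) := by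
        push_cast; ring
      simpa only [he] using h)
    (fun k y hy => by
      have hyr : |y| < r := abs_lt.mpr hy
      rw [Real.norm_eq_abs, abs_mul, abs_mul, abs_of_pos (aDF_pos k),
        abs_of_nonneg (by positivity : (0:ℝ) ≤ 2 * (k:ℝ)), abs_pow]
      calc aDF k * (2 * (k:ℝ)) * |y| ^ (2 * k - 1)
          ≤ 1 * (2 * (k:ℝ)) * r ^ (2 * k - 1) := by
            apply mul_le_mul (mul_le_mul_of_nonneg_right (aDF_le_one k) (by positivity))
              (pow_le_pow_left₀ (abs_nonneg y) hyr.le _) (by positivity) (by positivity)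
        _ = 2 * (k:ℝ) * r ^ (2 * k - 1) := by ring)
    (mem_Ioo.mpr ⟨by linarith, by linarith⟩)
    (by
      apply summable_of_ne_finset_zero (s := ({0} : Finset ℕ))
      intro k hk
      simp only [Finset.mem_singleton] at hk
      simp [zero_pow (by omega : 2 * k ≠ 0)])
    hmem
  exact key
lemma hfun_zero : hfun 0 = 1 := by
  unfold hfun
  rw [tsum_eq_single 0 (fun k hk => by simp [zero_pow (by omega : 2 * k ≠ 0)])]
  simp [aDF_zero]

lemma D_eq {x : ℝ} (hx : |x| < 1) : (1 - x ^ 2) * Dfun x = x * hfun x := by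
  set b : ℕ → ℝ := fun k => aDF k * (2 * (k:ℝ) + 1) * x ^ (2 * k + 1) with hbdef
  have hb : Summable b := summable_b hx
  have he : Summable (fun k : ℕ => aDF k * x ^ (2 * k + 1)) := by
    refine Summable.of_norm_bounded hb.abs (fun k => ?_)
    rw [Real.norm_eq_abs, abs_mul, abs_mul, abs_mul, abs_of_pos (aDF_pos k),
      abs_of_pos (by positivity : (0:ℝ) < 2 * (k:ℝ) + 1)]
    have hB : (0:ℝ) ≤ (2 * (k:ℝ)) * (aDF k * |x ^ (2 * k + 1)|) :=
      mul_nonneg (by positivity) (mul_nonneg (aDF_pos k).le (abs_nonneg _))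
    nlinarith [hB]
  set bprev : ℕ → ℝ := fun k => match k with | 0 => 0 | (n+1) => b n with hbp
  have hbprev : Summable bprev := by
    apply (summable_nat_add_iff 1).mp
    exact hb.congr (fun n => rfl)
  -- Dfun x = ∑' b
  have hD1 : Dfun x = ∑' k, b k := by
    unfold Dfun
    rw [Summable.tsum_eq_zero_add (by exact_mod_cast summable_D hx)]
    have h0 : aDF 0 * (2 * ((0:ℕ):ℝ)) * x ^ (2 * 0 - 1) = 0 := by norm_num
    rw [show aDF 0 * (2 * ((0:ℕ):ℝ)) * x ^ (2 * 0 - 1) = 0 by norm_num, zero_add]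
    apply tsum_congr
    intro k
    have hsub : 2 * (k + 1) - 1 = 2 * k + 1 := by omega
    have hrec := aDF_succ k
    rw [hsub, hbdef]
    push_cast
    linear_combination x ^ (2 * k + 1) * hrec
  -- telescoping identity
  have key : ∀ k, b k = aDF k * x ^ (2 * k + 1) + x ^ 2 * bprev k := by
    intro k
    cases k with
    | zero => show b 0 = aDF 0 * x ^ (2 * 0 + 1) + x ^ 2 * 0
              rw [hbdef]; norm_num
    | succ n =>
      show b (n + 1) = aDF (n + 1) * x ^ (2 * (n + 1) + 1) + x ^ 2 * b n
      rw [hbdef]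
      have hrec := aDF_succ n
      push_cast
      linear_combination x ^ (2 * n + 3) * hrec
  have hsum : (∑' k, b k) = (∑' k, aDF k * x ^ (2 * k + 1)) + x ^ 2 * ∑' k, bprev k := by
    rw [← tsum_mul_left]
    rw [← Summable.tsum_add he (hbprev.mul_left (x ^ 2))]
    exact tsum_congr key
  have hbp_eq : (∑' k, bprev k) = ∑' k, b k := by
    rw [Summable.tsum_eq_zero_add hbprev]
    show (0:ℝ) + (∑' k, b k) = ∑' k, b k
    rw [zero_add]
  have hxh : x * hfun x = ∑' k, aDF k * x ^ (2 * k + 1) := by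
    unfold hfun
    rw [← tsum_mul_left]
    apply tsum_congr
    intro k
    ring
  rw [hD1, hxh]
  rw [hbp_eq] at hsum
  linarith [hsum]

lemma sqrt_mul_hfun {x : ℝ} (hx : x ∈ Ioo (-1:ℝ) 1) : Real.sqrt (1 - x ^ 2) * hfun x = 1 := by
  have main : EqOn (fun y => Real.sqrt (1 - y ^ 2) * hfun y) (fun _ => (1:ℝ)) (Ioo (-1:ℝ) 1) := by
    apply eqOn_Ioo_of_hasDerivAt (F' := fun _ => (0:ℝ))
    · intro y hy
      have hy' : |y| < 1 := abs_lt.mpr ⟨hy.1, hy.2⟩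
      have h1 : (0:ℝ) < 1 - y ^ 2 := by nlinarith [(sq_lt_one_iff_abs_lt_one y).mpr hy']
      have hs : HasDerivAt (fun z : ℝ => 1 - z ^ 2) (-(2 * y)) y := by
        have := (hasDerivAt_pow 2 y).const_sub 1
        simpa using this
      have hsq : HasDerivAt (fun z => Real.sqrt (1 - z ^ 2))
          (1 / (2 * Real.sqrt (1 - y ^ 2)) * (-(2 * y))) y :=
        (Real.hasDerivAt_sqrt h1.ne').comp y hs
      have hmul := hsq.mul (hasDerivAt_hfun hy')
      have hsp : 0 < Real.sqrt (1 - y ^ 2) := Real.sqrt_pos.mpr h1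
      have hs2 : Real.sqrt (1 - y ^ 2) ^ 2 = 1 - y ^ 2 := Real.sq_sqrt h1.le
      have hD := D_eq hy'
      have hval : 1 / (2 * Real.sqrt (1 - y ^ 2)) * (-(2 * y)) * hfun y
          + Real.sqrt (1 - y ^ 2) * Dfun y = 0 := by
        have hDval : Dfun y = y * hfun y / (1 - y ^ 2) := by
          field_simp
          linarith [hD]
        rw [hDval]
        field_simp
        linear_combination (y * hfun y) * hs2
      rw [← hval]
      exact hmul
    · intro y _
      exact hasDerivAt_const y 1
    · simp [hfun_zero]
  exact main hx
lemma Sfun_zero : Sfun 0 = 0 := by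
  unfold Sfun
  have : ∀ k : ℕ, cDF k * (0:ℝ) ^ (2 * k + 1) = 0 := fun k => by
    simp [zero_pow (by omega : 2 * k + 1 ≠ 0)]
  simp only [this, tsum_zero]

lemma arcsin_eqOn : EqOn Real.arcsin Sfun (Ioo (-1:ℝ) 1) := by
  apply eqOn_Ioo_of_hasDerivAt (F' := fun y => 1 / Real.sqrt (1 - y ^ 2))
  · intro y hy
    exact Real.hasDerivAt_arcsin (ne_of_gt hy.1) (ne_of_lt hy.2)
  · intro y hy
    have hy' : |y| < 1 := abs_lt.mpr ⟨hy.1, hy.2⟩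
    have h1 : (0:ℝ) < 1 - y ^ 2 := by nlinarith [(sq_lt_one_iff_abs_lt_one y).mpr hy']
    have hsp : 0 < Real.sqrt (1 - y ^ 2) := Real.sqrt_pos.mpr h1
    have hval : hfun y = 1 / Real.sqrt (1 - y ^ 2) :=
      eq_one_div_of_mul_eq_one_left (by rw [mul_comm]; exact sqrt_mul_hfun hy)
    rw [← hval]
    exact hasDerivAt_Sfun hy'
  · rw [Real.arcsin_zero, Sfun_zero]

noncomputable def clampI (x : ℝ) : ℝ := max (-1) (min 1 x)

lemma clampI_abs (x : ℝ) : |clampI x| ≤ 1 := by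
  rw [abs_le]
  constructor
  · exact le_max_left _ _
  · exact max_le (by norm_num) (min_le_left _ _)

lemma clampI_eq {x : ℝ} (h1 : -1 ≤ x) (h2 : x ≤ 1) : clampI x = x := by
  unfold clampI
  rw [min_eq_right h2, max_eq_right h1]

lemma arcsin_eq_Sfun {x : ℝ} (hx : x ∈ Icc (-1:ℝ) 1) : Real.arcsin x = Sfun x := by
  set T : ℝ → ℝ := fun y => ∑' k : ℕ, cDF k * (clampI y) ^ (2 * k + 1) with hT
  have hclamp_cont : Continuous clampI :=
    continuous_const.max (continuous_const.min continuous_id)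
  have hTcont : Continuous T := by
    apply continuous_tsum (u := cDF)
      (fun k => continuous_const.mul (hclamp_cont.pow _)) summable_cDF
    intro k y
    show ‖cDF k * clampI y ^ (2 * k + 1)‖ ≤ cDF k
    rw [Real.norm_eq_abs, abs_mul, abs_of_pos (cDF_pos k), abs_pow]
    calc cDF k * |clampI y| ^ (2 * k + 1) ≤ cDF k * 1 := by
          apply mul_le_mul_of_nonneg_left _ (cDF_pos k).le
          exact pow_le_one₀ (abs_nonneg _) (clampI_abs y)
      _ = cDF k := mul_one _
  have hEq : EqOn T Real.arcsin (Ioo (-1:ℝ) 1) := by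
    intro y hy
    have hc : clampI y = y := clampI_eq hy.1.le hy.2.le
    have : T y = Sfun y := by rw [hT]; simp only [hc]; rfl
    rw [this, ← arcsin_eqOn hy]
  have hcl := hEq.closure hTcont Real.continuous_arcsin
  rw [closure_Ioo (by norm_num : (-1:ℝ) ≠ 1)] at hcl
  have h1 := hcl hx
  have hc : clampI x = x := clampI_eq hx.1 hx.2
  have h2 : T x = Sfun x := by
    rw [hT]
    simp only [hc]
    rfl
  rw [← h1]
  exact h2

/-- For `ρ ∈ [-1,1]`, the function `ρ · (π - arccos ρ)/(2π)` admits the power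
series expansion `ρ/4 + (1/(2π)) · ∑_{l=1}^∞ ((2l-3)!!/((2l-2)!!·(2l-1))) ρ^{2l}`,
with the series converging for all `ρ ∈ [-1,1]`. (The sum over `l ≥ 1` is
indexed by `k : ℕ` via `l = k + 1`, so the coefficient is
`(2k-1)!!/((2k)!!·(2k+1))` and the power is `ρ^{2(k+1)}`.) -/
theorem arccos_kernel_power_series (ρ : ℝ) (hρ : ρ ∈ Set.Icc (-1 : ℝ) 1) :
    Summable (fun k : ℕ =>
      ((Nat.doubleFactorial (2 * k - 1) : ℝ) /
        ((Nat.doubleFactorial (2 * k) : ℝ) * (2 * k + 1))) * ρ ^ (2 * (k + 1))) ∧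
    ρ * ((π - Real.arccos ρ) / (2 * π))
      = ρ / 4 + (1 / (2 * π)) *
          ∑' k : ℕ,
            ((Nat.doubleFactorial (2 * k - 1) : ℝ) /
              ((Nat.doubleFactorial (2 * k) : ℝ) * (2 * k + 1))) * ρ ^ (2 * (k + 1)) := by

  obtain ⟨h1, h2⟩ := hρ
  have habs : |ρ| ≤ 1 := abs_le.mpr ⟨h1, h2⟩
  have hS := summable_S habs
  have hcoef : ∀ k : ℕ, ((Nat.doubleFactorial (2 * k - 1) : ℝ) /
      ((Nat.doubleFactorial (2 * k) : ℝ) * (2 * k + 1))) = cDF k := by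
    intro k
    rw [cDF, aDF, div_div]
  have hfun_eq : ∀ k : ℕ, ((Nat.doubleFactorial (2 * k - 1) : ℝ) /
        ((Nat.doubleFactorial (2 * k) : ℝ) * (2 * k + 1))) * ρ ^ (2 * (k + 1))
      = ρ * (cDF k * ρ ^ (2 * k + 1)) := by
    intro k
    rw [hcoef k, show 2 * (k + 1) = (2 * k + 1) + 1 by omega, pow_succ]
    ring
  constructor
  · exact ((hS.mul_left ρ).congr (fun k => (hfun_eq k).symm))
  · have htsum : (∑' k : ℕ, ((Nat.doubleFactorial (2 * k - 1) : ℝ) /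
          ((Nat.doubleFactorial (2 * k) : ℝ) * (2 * k + 1))) * ρ ^ (2 * (k + 1)))
        = ρ * Real.arcsin ρ := by
      rw [tsum_congr hfun_eq, tsum_mul_left]
      rw [arcsin_eq_Sfun (mem_Icc.mpr ⟨h1, h2⟩)]
      rfl
    rw [htsum, Real.arccos_eq_pi_div_two_sub_arcsin]
    have hpi : (π : ℝ) ≠ 0 := Real.pi_ne_zero
    field_simp
    ring
end

section
/- The Taylor series of arcsin satisfies arcsin(x) = Σ_{l=0}^∞ ((2l-1)!!/(2l)!!) · x^{2l+1}/(2l+1) for all x ∈ [-1,1], with the series converging (absolutely for |x|<1 and conditionally including at |x| = 1). -/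
open Real Finset MeasureTheory intervalIntegral



noncomputable def bb (l : ℕ) : ℝ :=
  (Nat.doubleFactorial (2 * l - 1) : ℝ) / (Nat.doubleFactorial (2 * l) : ℝ)

lemma bb_def (l : ℕ) : bb l =
  (Nat.doubleFactorial (2 * l - 1) : ℝ) / (Nat.doubleFactorial (2 * l) : ℝ) := rfl

lemma bb_zero : bb 0 = 1 := by simp [bb, Nat.doubleFactorial]

lemma bb_pos (l : ℕ) : 0 < bb l :=
  div_pos (by exact_mod_cast Nat.doubleFactorial_pos _) (by exact_mod_cast Nat.doubleFactorial_pos _)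

lemma bb_rec (l : ℕ) : (2 * (l : ℝ) + 2) * bb (l + 1) = (2 * l + 1) * bb l := by
  have h1 : 2 * (l + 1) = (2 * l) + 2 := by ring
  have h2 : 2 * (l + 1) - 1 = (2 * l - 1) + 2 ∨ l = 0 := by
    rcases l with _ | m
    · right; rfl
    · left; omega
  have hd2 : (Nat.doubleFactorial (2 * (l + 1)) : ℝ)
      = (2 * l + 2) * Nat.doubleFactorial (2 * l) := by
    rw [h1, Nat.doubleFactorial_add_two]; push_cast; ring
  have hd1 : (Nat.doubleFactorial (2 * (l + 1) - 1) : ℝ)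
      = (2 * l + 1) * Nat.doubleFactorial (2 * l - 1) := by
    rcases h2 with h | h
    · rw [show 2 * (l+1) - 1 = (2*l-1)+2 from h, Nat.doubleFactorial_add_two]
      have : ((2 * l - 1 : ℕ) : ℝ) + 2 = 2 * l + 1 := by
        have : 1 ≤ 2 * l := by rcases Nat.eq_zero_or_pos l with h0 | h0 <;> omega
        push_cast [Nat.cast_sub this]; ring
      push_cast; push_cast at this; rw [this]
    · subst h; norm_num [Nat.doubleFactorial]
  have hne : (Nat.doubleFactorial (2 * l) : ℝ) ≠ 0 := by
    exact_mod_cast (Nat.doubleFactorial_pos _).ne'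
  have hne2 : (2 * (l:ℝ) + 2) ≠ 0 := by positivity
  unfold bb
  rw [hd1, hd2]
  field_simp


lemma conv_eq_one : ∀ n : ℕ, ∑ k ∈ range (n + 1), bb k * bb (n - k) = 1 := by
  intro n
  induction n with
  | zero => simp [bb_zero]
  | succ n ih =>
    have refl : ∀ (m : ℕ) (c : ℕ → ℝ),
        ∑ k ∈ range (m + 1), c k * (bb k * bb (m - k))
          = ∑ k ∈ range (m + 1), c (m - k) * (bb k * bb (m - k)) := by
      intro m c
      rw [← Finset.sum_range_reflect (fun k => c k * (bb k * bb (m - k))) (m + 1)]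
      apply Finset.sum_congr rfl
      intro k hk
      rw [Finset.mem_range] at hk
      have h1 : m + 1 - 1 - k = m - k := by omega
      have h2 : m - (m - k) = k := by omega
      rw [h1, h2, mul_comm (bb (m-k)) (bb k)]
    have doubledgen : ∀ m : ℕ, 2 * (∑ k ∈ range (m + 1), (k : ℝ) * (bb k * bb (m - k)))
        = (m : ℝ) * ∑ k ∈ range (m + 1), bb k * bb (m - k) := by
      intro m
      have hrefl := refl m (fun k => (k : ℝ))
      have cast1 : ∀ k ∈ range (m + 1), (((m - k : ℕ) : ℝ)) * (bb k * bb (m - k))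
          = ((m:ℝ) - k) * (bb k * bb (m - k)) := by
        intro k hk
        rw [Finset.mem_range] at hk
        rw [Nat.cast_sub (by omega : k ≤ m)]
      rw [Finset.sum_congr rfl cast1] at hrefl
      have key : (∑ k ∈ range (m + 1), (k : ℝ) * (bb k * bb (m - k)))
            + (∑ k ∈ range (m + 1), (k : ℝ) * (bb k * bb (m - k)))
          = ∑ k ∈ range (m + 1), (m : ℝ) * (bb k * bb (m - k)) := by
        nth_rewrite 2 [hrefl]
        rw [← Finset.sum_add_distrib]
        exact Finset.sum_congr rfl fun k hk => by ring
      rw [two_mul, key, ← Finset.mul_sum]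
    have shiftA : ∑ k ∈ range (n + 2), (2 * (k : ℝ)) * (bb k * bb (n + 1 - k))
        = ∑ j ∈ range (n + 1), ((2 : ℝ) * j + 1) * (bb j * bb (n - j)) := by
      rw [Finset.sum_range_succ' (fun k => (2 * (k : ℝ)) * (bb k * bb (n + 1 - k))) (n + 1)]
      simp only [Nat.cast_zero, mul_zero, zero_mul, add_zero]
      apply Finset.sum_congr rfl
      intro j hj
      rw [Finset.mem_range] at hj
      have h1 : n + 1 - (j + 1) = n - j := by omega
      have h2 := bb_rec j
      push_cast [h1]
      linear_combination bb (n - j) * h2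
    have expand : ∑ j ∈ range (n + 1), ((2 : ℝ) * j + 1) * (bb j * bb (n - j))
        = 2 * (∑ j ∈ range (n + 1), (j : ℝ) * (bb j * bb (n - j)))
          + ∑ j ∈ range (n + 1), bb j * bb (n - j) := by
      rw [Finset.mul_sum, ← Finset.sum_add_distrib]
      exact Finset.sum_congr rfl fun k hk => by ring
    have e1 : ∑ k ∈ range (n + 2), (2 * (k : ℝ)) * (bb k * bb (n + 1 - k))
        = 2 * ∑ k ∈ range (n + 2), (k : ℝ) * (bb k * bb (n + 1 - k)) := by
      rw [Finset.mul_sum]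
      exact Finset.sum_congr rfl fun k _ => by ring
    have key2 : ((n:ℝ) + 1) * ∑ k ∈ range (n + 2), bb k * bb (n + 1 - k)
        = ((n:ℝ) + 1) * ∑ k ∈ range (n + 1), bb k * bb (n - k) := by
      have d1 := doubledgen (n + 1)
      push_cast at d1
      rw [← d1, ← e1, shiftA, expand, doubledgen n]
      ring
    have := mul_left_cancel₀ (by positivity : ((n:ℝ) + 1) ≠ 0) key2
    rw [this, ih]


lemma bb_sq (l : ℕ) : (2 * (l:ℝ) + 1) * bb l ^ 2 ≤ 1 := by
  induction l with
  | zero => simp [bb_zero]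
  | succ n ih =>
    have h2 := bb_rec n
    have hp := bb_pos n
    have hp1 := bb_pos (n + 1)
    have hz : (0:ℝ) < 2 * (n:ℝ) + 2 := by positivity
    have hb1 : bb (n + 1) = (2 * (n:ℝ) + 1) / (2 * n + 2) * bb n := by
      field_simp; linarith [h2]
    push_cast
    rw [hb1]
    have hn : (0:ℝ) ≤ (n:ℝ) := Nat.cast_nonneg n
    have e : (2 * ((n:ℝ) + 1) + 1) * ((2 * n + 1) / (2 * n + 2) * bb n) ^ 2
        = ((2 * n + 3) * (2 * n + 1) / (2 * n + 2) ^ 2) * ((2 * n + 1) * bb n ^ 2) := by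
      field_simp; ring
    rw [e]
    have hfrac : (2 * (n:ℝ) + 3) * (2 * n + 1) / (2 * n + 2) ^ 2 ≤ 1 := by
      rw [div_le_one (by positivity)]; nlinarith
    have hnn : (0:ℝ) ≤ (2 * (n:ℝ) + 1) * bb n ^ 2 := by positivity
    nlinarith [hfrac, hnn, ih]

lemma bb_le_one (l : ℕ) : bb l ≤ 1 := by
  have h := bb_sq l
  have hp := bb_pos l
  nlinarith [Nat.cast_nonneg (α := ℝ) l]

lemma bb_mul_sqrt (l : ℕ) : bb l * Real.sqrt (2 * l + 1) ≤ 1 := by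
  have h := bb_sq l
  have hp := bb_pos l
  have hs : Real.sqrt (2 * (l:ℝ) + 1) ^ 2 = 2 * l + 1 :=
    Real.sq_sqrt (by positivity)
  nlinarith [Real.sqrt_nonneg (2 * (l:ℝ) + 1), hs]

lemma summable_c : Summable (fun l : ℕ => bb l / (2 * (l:ℝ) + 1)) := by
  have hsum : Summable (fun l : ℕ => 1 / ((l:ℝ) + 1) ^ (3/2 : ℝ)) := by
    have h0 : Summable (fun n : ℕ => 1 / (n:ℝ) ^ (3/2 : ℝ)) :=
      Real.summable_one_div_nat_rpow.mpr (by norm_num)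
    exact (h0.comp_injective (add_left_injective 1)).congr (fun l => by simp [Function.comp])
  apply Summable.of_nonneg_of_le
    (fun l => le_of_lt (div_pos (bb_pos l) (by positivity))) _ hsum
  intro l
  have hp := bb_pos l
  have h1 : ((l:ℝ) + 1) ^ (3/2 : ℝ) = ((l:ℝ) + 1) * Real.sqrt ((l:ℝ) + 1) := by
    rw [show (3/2 : ℝ) = 1 + 1/2 by norm_num, Real.rpow_add (by positivity), Real.rpow_one,
      Real.sqrt_eq_rpow]
  rw [h1, div_le_div_iff₀ (by positivity) (by positivity)]
  have hmono : Real.sqrt ((l:ℝ) + 1) ≤ Real.sqrt (2 * l + 1) :=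
    Real.sqrt_le_sqrt (by push_cast; linarith [Nat.cast_nonneg (α := ℝ) l])
  have h2 := bb_mul_sqrt l
  have h3 : bb l * Real.sqrt ((l:ℝ) + 1) ≤ 1 :=
    le_trans (by nlinarith [Real.sqrt_nonneg ((l:ℝ)+1)]) h2
  have h4 : (l:ℝ) + 1 ≤ 2 * l + 1 := by linarith [Nat.cast_nonneg (α := ℝ) l]
  nlinarith [Real.sqrt_nonneg ((l:ℝ)+1)]

lemma hasSum_g {y : ℝ} (hy0 : 0 ≤ y) (hy1 : y < 1) :
    HasSum (fun l : ℕ => bb l * y ^ l) (1 / Real.sqrt (1 - y)) := by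
  have hnorm : Summable fun l : ℕ => ‖bb l * y ^ l‖ := by
    apply Summable.of_nonneg_of_le (fun l => norm_nonneg _) _
      (summable_geometric_of_lt_one hy0 hy1)
    intro l
    rw [Real.norm_eq_abs, abs_of_nonneg (mul_nonneg (bb_pos l).le (pow_nonneg hy0 l))]
    calc bb l * y ^ l ≤ 1 * y ^ l := by
          apply mul_le_mul_of_nonneg_right (bb_le_one l) (by positivity)
      _ = y ^ l := one_mul _
  have hsummable : Summable fun l : ℕ => bb l * y ^ l := hnorm.of_norm
  set g := ∑' l, bb l * y ^ l with hg
  have hgs : HasSum (fun l : ℕ => bb l * y ^ l) g := hsummable.hasSum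
  have hsq : g * g = (1 - y)⁻¹ := by
    rw [hg, tsum_mul_tsum_eq_tsum_sum_range_of_summable_norm hnorm hnorm]
    have : ∀ n : ℕ, ∑ k ∈ range (n + 1), (bb k * y ^ k) * (bb (n - k) * y ^ (n - k))
        = y ^ n := by
      intro n
      have : ∀ k ∈ range (n + 1), (bb k * y ^ k) * (bb (n - k) * y ^ (n - k))
          = (bb k * bb (n - k)) * y ^ n := by
        intro k hk
        rw [Finset.mem_range] at hk
        have hy : y ^ k * y ^ (n - k) = y ^ n := by
          rw [← pow_add]; congr 1; omega
        rw [show bb k * y ^ k * (bb (n - k) * y ^ (n - k))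
            = (bb k * bb (n - k)) * (y ^ k * y ^ (n - k)) by ring, hy]
      rw [Finset.sum_congr rfl this, ← Finset.sum_mul, conv_eq_one n, one_mul]
    rw [tsum_congr this, tsum_geometric_of_lt_one hy0 hy1]
  have hgpos : (1:ℝ) ≤ g := by
    have h0 := le_hasSum hgs 0 (fun i _ => mul_nonneg (bb_pos i).le (pow_nonneg hy0 i))
    simpa [bb_zero] using h0
  have h1y : (0:ℝ) < 1 - y := by linarith
  have hsqrt : Real.sqrt (1 - y) > 0 := Real.sqrt_pos.mpr h1y
  have hgeq : g = 1 / Real.sqrt (1 - y) := by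
    have hsq2 : (Real.sqrt (1 - y) * g) ^ 2 = 1 := by
      rw [mul_pow, Real.sq_sqrt h1y.le, sq, hsq, mul_inv_cancel₀ h1y.ne']
    have hpos2 : 0 < Real.sqrt (1 - y) * g := by positivity
    have hmul : Real.sqrt (1 - y) * g = 1 := by nlinarith
    rw [eq_div_iff hsqrt.ne']
    linarith [hmul]
  rwa [hgeq] at hgs


lemma key_lt_one {x : ℝ} (hx0 : 0 ≤ x) (hx1 : x < 1) :
    HasSum (fun l : ℕ => bb l * x ^ (2 * l + 1) / (2 * (l:ℝ) + 1)) (Real.arcsin x) := by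
  -- continuity of the integrand on [0, x]
  have hcont : ContinuousOn (fun t : ℝ => 1 / Real.sqrt (1 - t ^ 2)) (Set.Icc 0 x) := by
    apply ContinuousOn.div continuousOn_const
    · exact (Real.continuous_sqrt.comp (by continuity)).continuousOn
    · intro t ht
      rcases ht with ⟨ht0, ht1⟩
      have : (0:ℝ) < 1 - t ^ 2 := by nlinarith
      exact (Real.sqrt_pos.mpr this).ne'
  -- FTC : arcsin x = ∫_0^x 1/√(1-t²)
  have hderiv : ∀ t ∈ Set.uIcc (0:ℝ) x, HasDerivAt Real.arcsin (1 / Real.sqrt (1 - t ^ 2)) t := by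
    intro t ht
    rw [Set.uIcc_of_le hx0] at ht
    exact Real.hasDerivAt_arcsin (by intro h; rw [h] at ht; linarith [ht.1])
      (by intro h; rw [h] at ht; linarith [ht.2])
  have hII : IntervalIntegrable (fun t : ℝ => 1 / Real.sqrt (1 - t ^ 2)) volume 0 x := by
    apply ContinuousOn.intervalIntegrable
    rwa [Set.uIcc_of_le hx0]
  have hFTC : ∫ t in (0:ℝ)..x, 1 / Real.sqrt (1 - t ^ 2) = Real.arcsin x := by
    rw [integral_eq_sub_of_hasDerivAt hderiv hII, Real.arcsin_zero, sub_zero]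
  -- convert to set integral over Ioc 0 x
  have hset : ∫ t in Set.Ioc (0:ℝ) x, 1 / Real.sqrt (1 - t ^ 2) = Real.arcsin x := by
    rw [← hFTC, intervalIntegral.integral_of_le hx0]
  -- term integrals
  have hterm : ∀ l : ℕ, ∫ t in Set.Ioc (0:ℝ) x, bb l * t ^ (2 * l)
      = bb l * x ^ (2 * l + 1) / (2 * (l:ℝ) + 1) := by
    intro l
    rw [← intervalIntegral.integral_of_le hx0, intervalIntegral.integral_const_mul,
      integral_pow]
    push_cast
    ring
  have hint : ∀ l : ℕ, Integrable (fun t : ℝ => bb l * t ^ (2 * l))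
      ((volume : Measure ℝ).restrict (Set.Ioc 0 x)) := by
    intro l
    apply Continuous.integrableOn_Ioc
    continuity
  have hnormint : ∀ l : ℕ, (∫ t in Set.Ioc (0:ℝ) x, ‖bb l * t ^ (2 * l)‖)
      = bb l * x ^ (2 * l + 1) / (2 * (l:ℝ) + 1) := by
    intro l
    rw [← hterm l]
    apply setIntegral_congr_fun measurableSet_Ioc
    intro t ht
    show ‖bb l * t ^ (2 * l)‖ = bb l * t ^ (2 * l)
    rw [Real.norm_eq_abs, abs_of_nonneg (mul_nonneg (bb_pos l).le (pow_nonneg ht.1.le _))]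
  have hsumnorm : Summable fun l : ℕ => ∫ t in Set.Ioc (0:ℝ) x, ‖bb l * t ^ (2 * l)‖ := by
    rw [funext hnormint]
    apply Summable.of_nonneg_of_le _ _ summable_c
    · intro l
      exact div_nonneg (mul_nonneg (bb_pos l).le (pow_nonneg hx0 _)) (by positivity)
    · intro l
      have hx' : x ^ (2 * l + 1) ≤ 1 := pow_le_one₀ hx0 hx1.le
      rw [div_le_div_iff₀ (by positivity) (by positivity)]
      have h5 := mul_le_mul_of_nonneg_left hx' (bb_pos l).le
      nlinarith [Nat.cast_nonneg (α := ℝ) l, h5]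
  have hmain := MeasureTheory.hasSum_integral_of_summable_integral_norm
    (μ := (volume : Measure ℝ).restrict (Set.Ioc 0 x)) hint hsumnorm
  -- identify ∫ ∑' with arcsin x
  have hae : ∫ t in Set.Ioc (0:ℝ) x, (∑' l : ℕ, bb l * t ^ (2 * l))
      = Real.arcsin x := by
    rw [← hset]
    apply setIntegral_congr_fun measurableSet_Ioc
    intro t ht
    have ht2 : t ^ 2 < 1 := by nlinarith [ht.1, ht.2]
    have h := hasSum_g (y := t ^ 2) (by positivity) ht2
    have heq : ∑' l : ℕ, bb l * (t ^ 2) ^ l = 1 / Real.sqrt (1 - t ^ 2) := h.tsum_eq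
    show ∑' l : ℕ, bb l * t ^ (2 * l) = 1 / Real.sqrt (1 - t ^ 2)
    rw [← heq]
    apply tsum_congr
    intro l
    rw [← pow_mul]
  rw [funext hterm, hae] at hmain
  exact hmain


lemma key_one : HasSum (fun l : ℕ => bb l / (2 * (l:ℝ) + 1)) (π / 2) := by
  set c : ℕ → ℝ := fun l => bb l / (2 * (l:ℝ) + 1) with hc
  have hcnonneg : ∀ l, 0 ≤ c l := fun l => le_of_lt (div_pos (bb_pos l) (by positivity))
  set u : ℕ → ℝ := fun n => 1 - 1 / ((n:ℝ) + 1) with hu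
  have hu0 : ∀ n, 0 ≤ u n := by
    intro n
    have h1 : 1 / ((n:ℝ) + 1) ≤ 1 := by
      rw [div_le_one (by positivity)]; linarith [Nat.cast_nonneg (α := ℝ) n]
    simp only [hu]; linarith
  have hu1 : ∀ n, u n < 1 := by
    intro n
    have : 0 < 1 / ((n:ℝ) + 1) := by positivity
    simp only [hu]; linarith
  have hutendsto : Filter.Tendsto u Filter.atTop (nhds 1) := by
    have h0 : Filter.Tendsto (fun n : ℕ => 1 / ((n:ℝ) + 1)) Filter.atTop (nhds 0) :=
      tendsto_one_div_add_atTop_nhds_zero_nat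
    have h2 := Filter.Tendsto.sub (tendsto_const_nhds (x := (1:ℝ))) h0
    simp only [sub_zero] at h2
    exact h2
  have harcsin_le : ∀ n, Real.arcsin (u n) ≤ π / 2 := fun n => Real.arcsin_le_pi_div_two _
  -- tsum c ≤ π/2
  have hS_le : ∑' l, c l ≤ π / 2 := by
    apply Summable.tsum_le_of_sum_le summable_c
    intro F
    have hterm_tendsto : Filter.Tendsto
        (fun n => ∑ l ∈ F, bb l * (u n) ^ (2 * l + 1) / (2 * (l:ℝ) + 1))
        Filter.atTop (nhds (∑ l ∈ F, c l)) := by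
      apply tendsto_finset_sum
      intro l _
      have : Filter.Tendsto (fun n => bb l * (u n) ^ (2 * l + 1) / (2 * (l:ℝ) + 1))
          Filter.atTop (nhds (bb l * (1:ℝ) ^ (2 * l + 1) / (2 * (l:ℝ) + 1))) := by
        apply Filter.Tendsto.div_const
        exact (hutendsto.pow (2 * l + 1)).const_mul (bb l)
      simpa [hc] using this
    apply le_of_tendsto hterm_tendsto
    filter_upwards with n
    have hks := key_lt_one (hu0 n) (hu1 n)
    calc ∑ l ∈ F, bb l * (u n) ^ (2 * l + 1) / (2 * (l:ℝ) + 1)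
        ≤ ∑' l, bb l * (u n) ^ (2 * l + 1) / (2 * (l:ℝ) + 1) := by
          apply Summable.sum_le_tsum F _ hks.summable
          intro l _
          exact div_nonneg (mul_nonneg (bb_pos l).le (pow_nonneg (hu0 n) _)) (by positivity)
      _ = Real.arcsin (u n) := hks.tsum_eq
      _ ≤ π / 2 := harcsin_le n
  -- π/2 ≤ tsum c
  have hS_ge : π / 2 ≤ ∑' l, c l := by
    have harc_tendsto : Filter.Tendsto (fun n => Real.arcsin (u n)) Filter.atTop
        (nhds (π / 2)) := by
      have := (Real.continuous_arcsin.tendsto 1).comp hutendsto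
      simpa [Real.arcsin_one, Function.comp_def] using this
    apply le_of_tendsto harc_tendsto
    filter_upwards with n
    have hks := key_lt_one (hu0 n) (hu1 n)
    rw [← hks.tsum_eq]
    apply Summable.tsum_le_tsum _ hks.summable summable_c
    intro l
    have hpow : (u n) ^ (2 * l + 1) ≤ 1 := pow_le_one₀ (hu0 n) (hu1 n).le
    show bb l * u n ^ (2 * l + 1) / (2 * (l:ℝ) + 1) ≤ bb l / (2 * (l:ℝ) + 1)
    rw [div_le_div_iff₀ (by positivity) (by positivity)]
    have h5 := mul_le_mul_of_nonneg_left hpow (bb_pos l).le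
    nlinarith [Nat.cast_nonneg (α := ℝ) l, h5]
  have : ∑' l, c l = π / 2 := le_antisymm hS_le hS_ge
  rw [← this]
  exact summable_c.hasSum


lemma key_nonneg {x : ℝ} (hx0 : 0 ≤ x) (hx1 : x ≤ 1) :
    HasSum (fun l : ℕ => bb l * x ^ (2 * l + 1) / (2 * (l:ℝ) + 1)) (Real.arcsin x) := by
  rcases lt_or_eq_of_le hx1 with h | h
  · exact key_lt_one hx0 h
  · subst h
    simpa [Real.arcsin_one] using key_one

/-- The Taylor series of `arcsin`: for all `x ∈ [-1,1]`,
`arcsin x = ∑_{l=0}^∞ ((2l-1)!!/(2l)!!) · x^{2l+1}/(2l+1)`, with the series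
converging (to `arcsin x`) on all of `[-1,1]`. -/
theorem arcsin_taylor_series (x : ℝ) (hx : x ∈ Set.Icc (-1 : ℝ) 1) :
    HasSum (fun l : ℕ =>
        ((Nat.doubleFactorial (2 * l - 1) : ℝ) / (Nat.doubleFactorial (2 * l) : ℝ)) *
          x ^ (2 * l + 1) / (2 * l + 1))
      (Real.arcsin x) := by
  have key : ∀ y : ℝ, y ∈ Set.Icc (-1:ℝ) 1 →
      HasSum (fun l : ℕ => bb l * y ^ (2 * l + 1) / (2 * (l:ℝ) + 1)) (Real.arcsin y) := by
    intro y hy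
    rcases le_or_gt 0 y with h0 | h0
    · exact key_nonneg h0 hy.2
    · have hz : HasSum (fun l : ℕ => bb l * (-y) ^ (2 * l + 1) / (2 * (l:ℝ) + 1))
          (Real.arcsin (-y)) :=
        key_nonneg (by linarith) (by linarith [hy.1])
      have := hz.neg
      rw [Real.arcsin_neg, neg_neg] at this
      have heq : (fun l : ℕ => bb l * y ^ (2 * l + 1) / (2 * (l:ℝ) + 1))
          = fun l : ℕ => -(bb l * (-y) ^ (2 * l + 1) / (2 * (l:ℝ) + 1)) := by
        funext l
        rw [Odd.neg_pow (odd_two_mul_add_one l)]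
        ring
      rw [heq]
      exact this
  have h := key x hx
  have hfun : (fun l : ℕ =>
        ((Nat.doubleFactorial (2 * l - 1) : ℝ) / (Nat.doubleFactorial (2 * l) : ℝ)) *
          x ^ (2 * l + 1) / (2 * l + 1))
      = fun l : ℕ => bb l * x ^ (2 * l + 1) / (2 * (l:ℝ) + 1) := by
    funext l
    rw [bb_def]
  rw [hfun]
  exact h
end

section
/- The function k(x,y) = (⟨x,y⟩)·((π - arccos⟨x,y⟩)/(2π)) defined on the unit sphere of R^d is a positive semidefinite kernel: for any finite collection of unit vectors x₁,...,xₙ and reals c₁,...,cₙ, Σ_{i,j} c_i c_j k(x_i, x_j) ≥ 0. -/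
/-!
Since `arccos t = π / 2 - arcsin t`, the kernel is `t / 4 + t * arcsin t / (2π)` in `t = ⟪x, y⟫`.
Integrating the binomial series of `(1 - t²)^(-1/2)` term by term shows that `t * arcsin t` is a
power series in `t` with nonnegative coefficients, convergent for `|t| < 1`. Every power
`⟪x, y⟫ ^ m` is a positive semidefinite kernel (expand one factor in coordinates and induct on `m`),
so the quadratic form is a nonnegative combination of nonnegative quadratic forms.
-/

open Real Finset

lemma ring_choose_add_sub_one_pos {a : ℝ} (ha : 0 < a) (n : ℕ) :
    0 < Ring.choose (a + n - 1) n := by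
  rw [Ring.choose_eq_smul, Polynomial.descPochhammer_smeval_eq_ascPochhammer,
    Polynomial.ascPochhammer_smeval_cast, Polynomial.ascPochhammer_smeval_eq_eval, smul_eq_mul,
    show a + n - 1 - n + 1 = a by ring]
  exact mul_pos (by positivity) (ascPochhammer_pos n a ha)

lemma hasSum_inv_sqrt_one_sub {u : ℝ} (hu : |u| < 1) :
    HasSum (fun n : ℕ ↦ Ring.choose ((1 / 2 : ℝ) + n - 1) n * u ^ n) (√(1 - u))⁻¹ := by
  have := (one_div_one_sub_rpow_hasFPowerSeriesOnBall_zero (1 / 2)).hasSum (y := u)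
    (by simpa [enorm_eq_nnnorm, ← NNReal.coe_lt_one] using hu)
  simpa [FormalMultilinearSeries.ofScalars_apply_eq, sqrt_eq_rpow, mul_comm] using this

/-- `Ring.choose (n - 1/2) n = (2n)! / (4ⁿ n!²)`; in the paper's notation `arcsinCoeff (l - 1)`
is `(2l-3)!! / ((2l-2)!! (2l-1))`. -/
noncomputable def arcsinCoeff (n : ℕ) : ℝ := Ring.choose ((1 / 2 : ℝ) + n - 1) n / (2 * n + 1)

lemma arcsinCoeff_nonneg (n : ℕ) : 0 ≤ arcsinCoeff n :=
  div_nonneg (ring_choose_add_sub_one_pos one_half_pos n).le (by positivity)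

lemma hasDerivAt_arcsinCoeff_mul_pow (n : ℕ) (z : ℝ) :
    HasDerivAt (fun z ↦ arcsinCoeff n * z ^ (2 * n + 1))
      (Ring.choose ((1 / 2 : ℝ) + n - 1) n * (z ^ 2) ^ n) z := by
  refine ((hasDerivAt_pow (2 * n + 1) z).const_mul (arcsinCoeff n)).congr_deriv ?_
  unfold arcsinCoeff
  push_cast
  field_simp
  ring

theorem hasSum_arcsin {t : ℝ} (ht : |t| < 1) :
    HasSum (fun n ↦ arcsinCoeff n * t ^ (2 * n + 1)) (arcsin t) := by
  obtain ⟨ρ, htρ, hρ⟩ := exists_between ht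
  have hρ0 : 0 < ρ := (abs_nonneg t).trans_lt htρ
  set s := Set.Ioo (-ρ) ρ
  have h0s : (0 : ℝ) ∈ s := ⟨by linarith, hρ0⟩
  have hts : t ∈ s := abs_lt.mp htρ
  have hsq : ∀ z ∈ s, |z ^ 2| < 1 := fun z hz ↦ by
    rw [abs_pow]; exact pow_lt_one₀ (abs_nonneg z) ((abs_lt.mpr hz).trans hρ) two_ne_zero
  have hρs : |ρ ^ 2| < 1 := by rw [abs_pow, abs_of_pos hρ0]; nlinarith
  have hbound : ∀ (n : ℕ), ∀ z ∈ s, ‖Ring.choose ((1 / 2 : ℝ) + n - 1) n * (z ^ 2) ^ n‖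
      ≤ Ring.choose ((1 / 2 : ℝ) + n - 1) n * (ρ ^ 2) ^ n := fun n z hz ↦ by
    have hc := ring_choose_add_sub_one_pos one_half_pos n
    rw [Real.norm_eq_abs, abs_of_nonneg (by positivity)]
    exact mul_le_mul_of_nonneg_left
      (pow_le_pow_left₀ (sq_nonneg z) (sq_le_sq' hz.1.le hz.2.le) n) hc.le
  have hu := (hasSum_inv_sqrt_one_sub hρs).summable
  have hF : ∀ z ∈ s, HasDerivAt (fun z ↦ ∑' n, arcsinCoeff n * z ^ (2 * n + 1))
      (√(1 - z ^ 2))⁻¹ z := fun z hz ↦ by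
    rw [← (hasSum_inv_sqrt_one_sub (hsq z hz)).tsum_eq]
    exact hasDerivAt_tsum_of_isPreconnected hu isOpen_Ioo isPreconnected_Ioo
      (fun n z _ ↦ hasDerivAt_arcsinCoeff_mul_pow n z) hbound h0s (by simp) hz
  have harcsin : ∀ z ∈ s, HasDerivAt arcsin (√(1 - z ^ 2))⁻¹ z := fun z hz ↦ by
    have := abs_lt.mp ((abs_lt.mpr hz).trans hρ)
    simpa using hasDerivAt_arcsin (by linarith) (by linarith)
  have heq := isOpen_Ioo.eqOn_of_deriv_eq isPreconnected_Ioo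
    (fun z hz ↦ (hF z hz).differentiableAt.differentiableWithinAt)
    (fun z hz ↦ (harcsin z hz).differentiableAt.differentiableWithinAt)
    (fun z hz ↦ (hF z hz).deriv.trans (harcsin z hz).deriv.symm) h0s (by simp) hts
  rw [← heq]
  exact (summable_of_summable_hasDerivAt_of_isPreconnected hu isOpen_Ioo isPreconnected_Ioo
    (fun n z _ ↦ hasDerivAt_arcsinCoeff_mul_pow n z) hbound h0s (by simp) hts).hasSum

section PositiveSemidefinite

variable {ι κ : Type*} [Fintype ι] [Fintype κ]

theorem sum_mul_inner_pow_nonneg (x : ι → EuclideanSpace ℝ κ) (c : ι → ℝ) (m : ℕ) :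
    0 ≤ ∑ i, ∑ j, c i * c j * inner ℝ (x i) (x j) ^ m := by
  induction m generalizing c with
  | zero => simpa [← sum_mul_sum] using mul_self_nonneg (∑ i, c i)
  | succ m ih =>
    have hterm : ∀ i j, c i * c j * inner ℝ (x i) (x j) ^ (m + 1)
        = ∑ a, c i * x i a * (c j * x j a) * inner ℝ (x i) (x j) ^ m := fun i j ↦ by
      have hinner : ∑ a, c i * x i a * (c j * x j a) = c i * c j * inner ℝ (x i) (x j) := by
        simp only [PiLp.inner_apply, RCLike.inner_apply, conj_trivial, mul_sum]
        exact sum_congr rfl fun a _ ↦ by ring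
      rw [← sum_mul, hinner, pow_succ]
      ring
    simp_rw [hterm]
    rw [(sum_congr rfl fun i _ ↦ sum_comm).trans sum_comm]
    exact sum_nonneg fun a _ ↦ ih _

theorem sum_mul_hasSum_inner_nonneg {β : Type*} {f : ℝ → ℝ} {b : β → ℝ} {e : β → ℕ}
    (hb : ∀ k, 0 ≤ b k) (x : ι → EuclideanSpace ℝ κ) (c : ι → ℝ)
    (hf : ∀ i j, HasSum (fun k ↦ b k * inner ℝ (x i) (x j) ^ e k) (f (inner ℝ (x i) (x j)))) :
    0 ≤ ∑ i, ∑ j, c i * c j * f (inner ℝ (x i) (x j)) := by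
  have hsum : HasSum (fun k ↦ b k * ∑ i, ∑ j, c i * c j * inner ℝ (x i) (x j) ^ e k)
      (∑ i, ∑ j, c i * c j * f (inner ℝ (x i) (x j))) := by
    simp_rw [mul_sum, mul_left_comm (b _)]
    exact hasSum_sum fun i _ ↦ hasSum_sum fun j _ ↦ (hf i j).mul_left _
  exact hsum.nonneg fun k ↦ mul_nonneg (hb k) (sum_mul_inner_pow_nonneg x c (e k))

theorem sum_mul_comp_inner_nonneg {β : Type*} {f : ℝ → ℝ} {b : β → ℝ} {e : β → ℕ}
    (hf : Continuous f) (hb : ∀ k, 0 ≤ b k)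
    (hfb : ∀ t, |t| < 1 → HasSum (fun k ↦ b k * t ^ e k) (f t))
    (x : ι → EuclideanSpace ℝ κ) (hx : ∀ i, ‖x i‖ ≤ 1) (c : ι → ℝ) :
    0 ≤ ∑ i, ∑ j, c i * c j * f (inner ℝ (x i) (x j)) := by
  -- The series is only available for `|t| < 1`: shrink the vectors by `r < 1`, then let `r → 1`.
  set g : ℝ → ℝ := fun r ↦ ∑ i, ∑ j, c i * c j * f (inner ℝ (r • x i) (r • x j))
  have hg : Continuous g := by fun_prop
  have hg_nonneg : ∀ r ∈ Set.Ioo (0 : ℝ) 1, 0 ≤ g r := fun r hr ↦ by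
    refine sum_mul_hasSum_inner_nonneg hb _ c fun i j ↦ hfb _ ?_
    calc |inner ℝ (r • x i) (r • x j)| ≤ ‖r • x i‖ * ‖r • x j‖ := abs_real_inner_le_norm _ _
      _ = r * r * (‖x i‖ * ‖x j‖) := by
        rw [norm_smul, norm_smul, Real.norm_of_nonneg hr.1.le]; ring
      _ ≤ r * r := mul_le_of_le_one_right (mul_self_nonneg r)
        (mul_le_one₀ (hx i) (norm_nonneg _) (hx j))
      _ < 1 := by nlinarith [hr.1, hr.2]
  have hlim : Filter.Tendsto g (nhdsWithin 1 (Set.Iio 1)) (nhds (g 1)) :=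
    (hg.tendsto 1).mono_left nhdsWithin_le_nhds
  simpa [g] using
    ge_of_tendsto hlim (Filter.mem_of_superset (Ioo_mem_nhdsLT zero_lt_one) hg_nonneg)

end PositiveSemidefinite

/-- The kernel `k(x,y) = ⟨x,y⟩ · (π - arccos⟨x,y⟩)/(2π)` on the unit sphere of
`ℝ^d` is positive semidefinite: for unit vectors `x₁,…,xₙ` and reals `c₁,…,cₙ`,
`∑_{i,j} cᵢ cⱼ k(xᵢ,xⱼ) ≥ 0`. -/
theorem arccos_kernel_posSemidef {d n : ℕ} (x : Fin n → EuclideanSpace ℝ (Fin d))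
    (hx : ∀ i, ‖x i‖ = 1) (c : Fin n → ℝ) :
    0 ≤ ∑ i : Fin n, ∑ j : Fin n,
        c i * c j *
          ((inner ℝ (x i) (x j) : ℝ) * ((π - Real.arccos (inner ℝ (x i) (x j) : ℝ)) / (2 * π))) := by
  have hkernel : ∀ a t : ℝ, a * (t * ((π - arccos t) / (2 * π)))
      = 4⁻¹ * (a * t ^ 1) + (2 * π)⁻¹ * (a * (t * arcsin t)) := fun a t ↦ by
    rw [arccos]; field_simp; ring
  have hseries : ∀ t : ℝ, |t| < 1 →
      HasSum (fun k ↦ arcsinCoeff k * t ^ (2 * k + 2)) (t * arcsin t) := fun t ht ↦ by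
    simpa only [pow_succ' t (2 * _ + 1), mul_left_comm t] using (hasSum_arcsin ht).mul_left t
  simp only [hkernel, sum_add_distrib, ← mul_sum]
  exact add_nonneg (mul_nonneg (by norm_num) (sum_mul_inner_pow_nonneg x c 1))
    (mul_nonneg (by positivity) (sum_mul_comp_inner_nonneg (by fun_prop) arcsinCoeff_nonneg
      hseries x (fun i ↦ (hx i).le) c))
end
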